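/- Every parsing expression grammar G has an equivalent parsing expression grammar G' in Chomsky normal form, i.e., a PEG G' such that L(G') = L(G), the axiom of G' never occurs on the right-hand side of any rule of G', every rule of G' has one of the forms A ← B / C, A ← B C, A ← !B, A ← a, or A ← ε, and moreover G' is complete whenever G is complete. -/
import Mathlib


/-! ### Parsing expression grammars -/

/-- Parsing expressions over nonterminals `N` and input alphabet `A`:
`ε`, terminals, nonterminals, sequence, prioritized choice, not-predicate. -/
inductive PExp (N A : Type) : Type where
  | eps : PExp N A
  | term : A → PExp N A
  | nt : N → PExp N A
  | seq : PExp N A → PExp N A → PExp N A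
  | choice : PExp N A → PExp N A → PExp N A
  | not : PExp N A → PExp N A

/-- A parsing expression grammar: one rule per nonterminal, and an axiom. -/
structure PEG (N A : Type) : Type where
  rule : N → PExp N A
  start : N

/-- Big-step relational semantics of the PEG parsing function `R`:
`Parses G e w r` means `R(e, w) = r`, where `r = none` encodes the failure `F`
and `r = some s` means that `e` consumed a prefix of `w` leaving the suffix `s`.
`R(e, w)` is defined iff `∃ r, Parses G e w r`. -/
inductive Parses {N A : Type} (G : PEG N A) : PExp N A → List A → Option (List A) → Prop where
  | eps (w : List A) : Parses G .eps w (some w)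
  | term_ok (a : A) (s : List A) : Parses G (.term a) (a :: s) (some s)
  | term_mismatch {a b : A} (s : List A) (h : a ≠ b) : Parses G (.term a) (b :: s) none
  | term_nil (a : A) : Parses G (.term a) [] none
  | nt {B : N} {w : List A} {r : Option (List A)} :
      Parses G (G.rule B) w r → Parses G (.nt B) w r
  | seq_ok {e₁ e₂ : PExp N A} {w w' : List A} {r : Option (List A)} :
      Parses G e₁ w (some w') → Parses G e₂ w' r → Parses G (.seq e₁ e₂) w r
  | seq_fail {e₁ e₂ : PExp N A} {w : List A} :
      Parses G e₁ w none → Parses G (.seq e₁ e₂) w none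
  | choice_fst {e₁ e₂ : PExp N A} {w w' : List A} :
      Parses G e₁ w (some w') → Parses G (.choice e₁ e₂) w (some w')
  | choice_snd {e₁ e₂ : PExp N A} {w : List A} {r : Option (List A)} :
      Parses G e₁ w none → Parses G e₂ w r → Parses G (.choice e₁ e₂) w r
  | not_succ {e : PExp N A} {w : List A} :
      Parses G e w none → Parses G (.not e) w (some w)
  | not_fail {e : PExp N A} {w w' : List A} :
      Parses G e w (some w') → Parses G (.not e) w none

/-- The language generated by a PEG: `L(G) = {w | R(S, w) = ε}`. -/
def PEG.Lang {N A : Type} (G : PEG N A) : Set (List A) :=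
  {w | Parses G (.nt G.start) w (some [])}

/-- A PEG is complete if `R(S, w)` is defined for every input `w`. -/
def PEG.Complete {N A : Type} (G : PEG N A) : Prop :=
  ∀ w : List A, ∃ r, Parses G (.nt G.start) w r

/-- The set of nonterminals occurring in an expression. -/
def PExp.nts {N A : Type} : PExp N A → Set N
  | .eps => ∅
  | .term _ => ∅
  | .nt B => {B}
  | .seq e₁ e₂ => e₁.nts ∪ e₂.nts
  | .choice e₁ e₂ => e₁.nts ∪ e₂.nts
  | .not e => e.nts

/-- Chomsky normal form for PEGs: the axiom never occurs on a right-hand side,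
and every rule has one of the forms `A ← B / C`, `A ← B C`, `A ← !B`, `A ← a`, `A ← ε`. -/
def PEG.ChomskyNF {N A : Type} (G : PEG N A) : Prop :=
  (∀ B : N, G.start ∉ (G.rule B).nts) ∧
  ∀ B : N,
    (∃ C D : N, G.rule B = .choice (.nt C) (.nt D)) ∨
    (∃ C D : N, G.rule B = .seq (.nt C) (.nt D)) ∨
    (∃ C : N, G.rule B = .not (.nt C)) ∨
    (∃ a : A, G.rule B = .term a) ∨
    G.rule B = .eps

namespace PegCNF

variable {N A : Type}

/-- All subexpressions of an expression (including itself). -/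
def subs : PExp N A → Set (PExp N A)
  | .eps => {.eps}
  | .term a => {.term a}
  | .nt B => {.nt B}
  | .seq e₁ e₂ => insert (.seq e₁ e₂) (subs e₁ ∪ subs e₂)
  | .choice e₁ e₂ => insert (.choice e₁ e₂) (subs e₁ ∪ subs e₂)
  | .not e => insert (.not e) (subs e)

lemma subs_finite (e : PExp N A) : (subs e).Finite := by
  induction e with
  | eps => exact Set.finite_singleton _
  | term a => exact Set.finite_singleton _
  | nt B => exact Set.finite_singleton _
  | seq e₁ e₂ h₁ h₂ => exact ((h₁.union h₂).insert _)
  | choice e₁ e₂ h₁ h₂ => exact ((h₁.union h₂).insert _)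
  | not e h => exact h.insert _

lemma self_mem_subs (e : PExp N A) : e ∈ subs e := by
  cases e <;> simp [subs]

lemma subs_trans {e f : PExp N A} (h : e ∈ subs f) : subs e ⊆ subs f := by
  induction f with
  | eps => simp [subs] at h; subst h; exact subset_rfl
  | term a => simp [subs] at h; subst h; exact subset_rfl
  | nt B => simp [subs] at h; subst h; exact subset_rfl
  | seq e₁ e₂ h₁ h₂ =>
      rcases h with h | h | h
      · subst h; exact subset_rfl
      · exact (h₁ h).trans (by intro x hx; exact Set.mem_insert_iff.2 (Or.inr (Or.inl hx)))
      · exact (h₂ h).trans (by intro x hx; exact Set.mem_insert_iff.2 (Or.inr (Or.inr hx)))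
  | choice e₁ e₂ h₁ h₂ =>
      rcases h with h | h | h
      · subst h; exact subset_rfl
      · exact (h₁ h).trans (by intro x hx; exact Set.mem_insert_iff.2 (Or.inr (Or.inl hx)))
      · exact (h₂ h).trans (by intro x hx; exact Set.mem_insert_iff.2 (Or.inr (Or.inr hx)))
  | not e hih =>
      rcases h with h | h
      · subst h; exact subset_rfl
      · exact (hih h).trans (by intro x hx; exact Set.mem_insert_iff.2 (Or.inr hx))

/-- The carrier set of new nonterminals (besides the fresh axiom). -/
def S (G : PEG N A) : Set (PExp N A) :=
  (⋃ B, subs (G.rule B)) ∪ Set.range PExp.nt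

lemma S_finite [Finite N] (G : PEG N A) : (S G).Finite :=
  (Set.finite_iUnion fun B => subs_finite (G.rule B)).union (Set.finite_range _)

lemma nt_mem_S (G : PEG N A) (B : N) : (.nt B : PExp N A) ∈ S G :=
  Or.inr ⟨B, rfl⟩

lemma rule_mem_S (G : PEG N A) (B : N) : G.rule B ∈ S G :=
  Or.inl (Set.mem_iUnion.2 ⟨B, self_mem_subs _⟩)

lemma mem_S_seq {G : PEG N A} {e₁ e₂ : PExp N A} (h : (.seq e₁ e₂ : PExp N A) ∈ S G) :
    e₁ ∈ S G ∧ e₂ ∈ S G := by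
  rcases h with h | ⟨B, hB⟩
  · rcases Set.mem_iUnion.1 h with ⟨B, hB⟩
    have hsub := subs_trans hB
    constructor
    · exact Or.inl (Set.mem_iUnion.2 ⟨B, hsub (Set.mem_insert_iff.2 (Or.inr (Or.inl (self_mem_subs _))))⟩)
    · exact Or.inl (Set.mem_iUnion.2 ⟨B, hsub (Set.mem_insert_iff.2 (Or.inr (Or.inr (self_mem_subs _))))⟩)
  · cases hB

lemma mem_S_choice {G : PEG N A} {e₁ e₂ : PExp N A} (h : (.choice e₁ e₂ : PExp N A) ∈ S G) :
    e₁ ∈ S G ∧ e₂ ∈ S G := by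
  rcases h with h | ⟨B, hB⟩
  · rcases Set.mem_iUnion.1 h with ⟨B, hB⟩
    have hsub := subs_trans hB
    constructor
    · exact Or.inl (Set.mem_iUnion.2 ⟨B, hsub (Set.mem_insert_iff.2 (Or.inr (Or.inl (self_mem_subs _))))⟩)
    · exact Or.inl (Set.mem_iUnion.2 ⟨B, hsub (Set.mem_insert_iff.2 (Or.inr (Or.inr (self_mem_subs _))))⟩)
  · cases hB

lemma mem_S_not {G : PEG N A} {e : PExp N A} (h : (.not e : PExp N A) ∈ S G) : e ∈ S G := by
  rcases h with h | ⟨B, hB⟩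
  · rcases Set.mem_iUnion.1 h with ⟨B, hB⟩
    exact Or.inl (Set.mem_iUnion.2 ⟨B, subs_trans hB (Set.mem_insert_iff.2 (Or.inr (self_mem_subs _)))⟩)
  · cases hB

/-- New nonterminal type: `none` is the fresh axiom. -/
abbrev NT (G : PEG N A) : Type := Option ↥(S G)

/-- Alias rule `A ← B / B`, semantically equivalent to `A ← B`. -/
def aliasE {G : PEG N A} (x : NT G) : PExp (NT G) A := .choice (.nt x) (.nt x)

def body (G : PEG N A) (x : ↥(S G)) : PExp (NT G) A :=
  match x with
  | ⟨.eps, _⟩ => .eps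
  | ⟨.term a, _⟩ => .term a
  | ⟨.nt B, _⟩ => aliasE (some ⟨G.rule B, rule_mem_S G B⟩)
  | ⟨.seq e₁ e₂, h⟩ => .seq (.nt (some ⟨e₁, (mem_S_seq h).1⟩)) (.nt (some ⟨e₂, (mem_S_seq h).2⟩))
  | ⟨.choice e₁ e₂, h⟩ => .choice (.nt (some ⟨e₁, (mem_S_choice h).1⟩)) (.nt (some ⟨e₂, (mem_S_choice h).2⟩))
  | ⟨.not e, h⟩ => .not (.nt (some ⟨e, mem_S_not h⟩))

def rule' (G : PEG N A) : NT G → PExp (NT G) A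
  | none => aliasE (some ⟨.nt G.start, nt_mem_S G G.start⟩)
  | some x => body G x

def G' (G : PEG N A) : PEG (NT G) A := ⟨rule' G, none⟩

/-- Erasing: translating new expressions back to old ones. -/
def erase (G : PEG N A) : PExp (NT G) A → PExp N A
  | .eps => .eps
  | .term a => .term a
  | .nt none => .nt G.start
  | .nt (some x) => x.1
  | .seq e₁ e₂ => .seq (erase G e₁) (erase G e₂)
  | .choice e₁ e₂ => .choice (erase G e₁) (erase G e₂)
  | .not e => .not (erase G e)

lemma undup {G : PEG N A} {e : PExp N A} {w : List A} {r : Option (List A)}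
    (h : Parses G (.choice e e) w r) : Parses G e w r := by
  cases h with
  | choice_fst h => exact h
  | choice_snd h1 h2 => exact h2

lemma dup {G : PEG N A} {e : PExp N A} {w : List A} {r : Option (List A)}
    (h : Parses G e w r) : Parses G (.choice e e) w r := by
  cases r with
  | none => exact .choice_snd h h
  | some w' => exact .choice_fst h

/-- Backward: every parse in `G'` is a parse in `G` of the erased expression. -/
lemma bwd {G : PEG N A} {e' : PExp (NT G) A} {w : List A} {r : Option (List A)}
    (h : Parses (G' G) e' w r) : Parses G (erase G e') w r := by
  induction h with
  | eps w => exact .eps w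
  | term_ok a s => exact .term_ok a s
  | term_mismatch s hne => exact .term_mismatch s hne
  | term_nil a => exact .term_nil a
  | nt h ih =>
      rename_i ν _ _
      match ν with
      | none => exact undup ih
      | some ⟨.eps, he⟩ => exact ih
      | some ⟨.term a, he⟩ => exact ih
      | some ⟨.nt B, he⟩ => exact .nt (undup ih)
      | some ⟨.seq e₁ e₂, he⟩ => exact ih
      | some ⟨.choice e₁ e₂, he⟩ => exact ih
      | some ⟨.not e, he⟩ => exact ih
  | seq_ok h1 h2 ih1 ih2 => exact .seq_ok ih1 ih2
  | seq_fail h1 ih1 => exact .seq_fail ih1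
  | choice_fst h1 ih1 => exact .choice_fst ih1
  | choice_snd h1 h2 ih1 ih2 => exact .choice_snd ih1 ih2
  | not_succ h1 ih1 => exact .not_succ ih1
  | not_fail h1 ih1 => exact .not_fail ih1

/-- Forward: every parse in `G` of an expression in `S` yields a parse in `G'`. -/
lemma fwd {G : PEG N A} {e : PExp N A} {w : List A} {r : Option (List A)}
    (h : Parses G e w r) : ∀ he : e ∈ S G, Parses (G' G) (.nt (some ⟨e, he⟩)) w r := by
  induction h with
  | eps w => exact fun he => .nt (.eps w)
  | term_ok a s => exact fun he => .nt (.term_ok a s)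
  | term_mismatch s hne => exact fun he => .nt (.term_mismatch s hne)
  | term_nil a => exact fun he => .nt (.term_nil a)
  | nt h ih =>
      intro he
      exact .nt (dup (ih (rule_mem_S G _)))
  | seq_ok h1 h2 ih1 ih2 =>
      intro he
      exact .nt (.seq_ok (ih1 (mem_S_seq he).1) (ih2 (mem_S_seq he).2))
  | seq_fail h1 ih1 =>
      intro he
      exact .nt (.seq_fail (ih1 (mem_S_seq he).1))
  | choice_fst h1 ih1 =>
      intro he
      exact .nt (.choice_fst (ih1 (mem_S_choice he).1))
  | choice_snd h1 h2 ih1 ih2 =>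
      intro he
      exact .nt (.choice_snd (ih1 (mem_S_choice he).1) (ih2 (mem_S_choice he).2))
  | not_succ h1 ih1 =>
      intro he
      exact .nt (.not_succ (ih1 (mem_S_not he)))
  | not_fail h1 ih1 =>
      intro he
      exact .nt (.not_fail (ih1 (mem_S_not he)))

end PegCNF


/-- Every PEG has an equivalent PEG in Chomsky normal form,
which is complete whenever the original grammar is complete. -/
theorem peg_chomsky_normal_form {N A : Type} [Finite N] [Finite A] (G : PEG N A) :
    ∃ (N' : Type) (_ : Finite N') (G' : PEG N' A),
      G'.ChomskyNF ∧ G'.Lang = G.Lang ∧ (G.Complete → G'.Complete) := by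
  haveI : Finite ↥(PegCNF.S G) := (PegCNF.S_finite G).to_subtype
  haveI := Fintype.ofFinite ↥(PegCNF.S G)
  refine ⟨PegCNF.NT G, inferInstance, PegCNF.G' G, ⟨?_, ?_⟩, ?_, ?_⟩
  · -- axiom not on any RHS
    intro B
    match B with
    | none => simp [PegCNF.G', PegCNF.rule', PegCNF.aliasE, PExp.nts]
    | some ⟨.eps, he⟩ => simp [PegCNF.G', PegCNF.rule', PegCNF.body, PExp.nts]
    | some ⟨.term a, he⟩ => simp [PegCNF.G', PegCNF.rule', PegCNF.body, PExp.nts]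
    | some ⟨.nt C, he⟩ => simp [PegCNF.G', PegCNF.rule', PegCNF.body, PegCNF.aliasE, PExp.nts]
    | some ⟨.seq e₁ e₂, he⟩ => simp [PegCNF.G', PegCNF.rule', PegCNF.body, PExp.nts]
    | some ⟨.choice e₁ e₂, he⟩ => simp [PegCNF.G', PegCNF.rule', PegCNF.body, PExp.nts]
    | some ⟨.not e, he⟩ => simp [PegCNF.G', PegCNF.rule', PegCNF.body, PExp.nts]
  · -- rule forms
    intro B
    match B with
    | none => exact Or.inl ⟨_, _, rfl⟩
    | some ⟨.eps, he⟩ => exact Or.inr (Or.inr (Or.inr (Or.inr rfl)))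
    | some ⟨.term a, he⟩ => exact Or.inr (Or.inr (Or.inr (Or.inl ⟨a, rfl⟩)))
    | some ⟨.nt C, he⟩ => exact Or.inl ⟨_, _, rfl⟩
    | some ⟨.seq e₁ e₂, he⟩ => exact Or.inr (Or.inl ⟨_, _, rfl⟩)
    | some ⟨.choice e₁ e₂, he⟩ => exact Or.inl ⟨_, _, rfl⟩
    | some ⟨.not e, he⟩ => exact Or.inr (Or.inr (Or.inl ⟨_, rfl⟩))
  · -- language equality
    ext w
    constructor
    · intro h
      have := PegCNF.bwd h
      exact this
    · intro h
      have h1 := PegCNF.fwd h (PegCNF.nt_mem_S G G.start)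
      exact .nt (.choice_fst h1)
  · -- completeness
    intro hc w
    obtain ⟨r, hr⟩ := hc w
    exact ⟨r, .nt (PegCNF.dup (PegCNF.fwd hr (PegCNF.nt_mem_S G G.start)))⟩
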